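/- arXiv:2302.13702 — 2 statements merged into one kernel-verified Lean document; each statement's English description precedes it below -/
import Mathlib

section
/- Let p be an odd prime and let M, A be unitary operators on a finite-dimensional Hilbert space satisfying M^p = A^p = I and MA = ω^φ AM with φ ∈ F_p, φ ≠ 0, where ω = e^{2πi/p}. Then for any σ, a ∈ F_p, the operator V = (ω^a/√p) Σ_{k=0}^{p−1} ω^{−k(σ−a)} M^k A^{−k−1} is unitary. -/
open Matrix

/-- The `p`-th root of unity `ω = e^{2πi/p}`. -/
noncomputable def omega (p : ℕ) : ℂ := Complex.exp (2 * Real.pi * Complex.I / p)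

/-- The operator `V = (ω^a/√p) Σ_{k=0}^{p−1} ω^{−k(σ−a)} M^k A^{−k−1}`,
where `A⁻¹ = A† = star A` for a unitary `A`. -/
noncomputable def Vop (p d : ℕ) (M A : Matrix (Fin d) (Fin d) ℂ) (σ a : ZMod p) :
    Matrix (Fin d) (Fin d) ℂ :=
  (omega p ^ a.val / (Real.sqrt p : ℂ)) •
    ∑ k ∈ Finset.range p,
      omega p ^ ((-(k : ZMod p) * (σ - a)).val) • (M ^ k * (star A) ^ (k + 1))

/-! Write `ω^x = ψ x` for the standard additive character `ψ` of `ZMod p`, so that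
`V = (ω^a/√p) • Σ_x ψ(-x b) • M^x A^{-x-1}` with `b = σ - a`. In `V†V = (1/p) Σ_{x,y} …` the
relation `M A = ψ φ • A M` moves every `M` to the right, turning the `(x, y)` term into
`ψ((x - y) b - φ (y - x)(y + 1)) • A^{x-y} M^{y-x}`. Grouped by `m = y - x`, the phase depends on
`x` only through the character `x ↦ ψ(-φ m x)`, which is nontrivial for `m ≠ 0` because `ψ` is
primitive and `φ ≠ 0`; so only `m = 0` survives, contributing `p • 1`. -/

lemma ZMod.sum_range_natCast {n : ℕ} [NeZero n] {β : Type*} [AddCommMonoid β]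
    (f : ZMod n → β) : ∑ k ∈ Finset.range n, f k = ∑ x : ZMod n, f x :=
  Finset.sum_nbij' (↑) ZMod.val (fun _ _ ↦ Finset.mem_univ _)
    (fun x _ ↦ Finset.mem_range.mpr x.val_lt)
    (fun _ hk ↦ ZMod.val_cast_of_lt (Finset.mem_range.mp hk))
    (fun x _ ↦ ZMod.natCast_zmod_val x) (fun _ _ ↦ rfl)

section PowVal

variable {G : Type*} [Monoid G] {n : ℕ} {X : G}

lemma pow_val_natCast (hX : X ^ n = 1) (k : ℕ) : X ^ (k : ZMod n).val = X ^ k := by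
  rw [ZMod.val_natCast, ← pow_eq_pow_mod k hX]

variable [NeZero n]

lemma pow_val_add (hX : X ^ n = 1) (x y : ZMod n) :
    X ^ (x + y).val = X ^ x.val * X ^ y.val := by
  rw [ZMod.val_add, ← pow_eq_pow_mod _ hX, pow_add]

lemma star_pow_val {R : Type*} [Monoid R] [StarMul R] {X : R} (hX : X ∈ unitary R)
    (hXn : X ^ n = 1) (x : ZMod n) : star (X ^ x.val) = X ^ (-x).val := by
  have hinv : X ^ x.val * X ^ (-x).val = 1 := by
    rw [← pow_val_add hXn, add_neg_cancel, ZMod.val_zero, pow_zero]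
  exact left_inv_eq_right_inv (Unitary.star_mul_self_of_mem (pow_mem hX _)) hinv

end PowVal

lemma pow_mul_pow_eq_smul {S R : Type*} [CommSemiring S] [Semiring R] [Algebra S R]
    {M A : R} {z : S} (h : M * A = z • (A * M)) (j k : ℕ) :
    M ^ j * A ^ k = z ^ (j * k) • (A ^ k * M ^ j) := by
  have hk : ∀ k : ℕ, M * A ^ k = z ^ k • (A ^ k * M) := by
    intro k
    induction k with
    | zero => simp
    | succ k ih =>
      rw [pow_succ, ← mul_assoc, ih, smul_mul_assoc, mul_assoc, h, mul_smul_comm, smul_smul,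
        ← mul_assoc, ← pow_succ]
  induction j with
  | zero => simp
  | succ j ih =>
    rw [pow_succ, mul_assoc, hk, mul_smul_comm, ← mul_assoc, ih, smul_mul_assoc, smul_smul,
      mul_assoc, ← pow_succ, ← pow_add, add_one_mul, add_comm]

lemma pow_val_mul_pow_val {S R : Type*} [CommSemiring S] [Semiring R] [Algebra S R]
    {p : ℕ} [NeZero p] {ψ : AddChar (ZMod p) S} {M A : R} {φ : ZMod p}
    (hcomm : M * A = ψ φ • (A * M)) (m n : ZMod p) :
    M ^ m.val * A ^ n.val = ψ (φ * m * n) • (A ^ n.val * M ^ m.val) := by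
  rw [pow_mul_pow_eq_smul hcomm, ← AddChar.map_nsmul_eq_pow, nsmul_eq_mul, Nat.cast_mul,
    ZMod.natCast_zmod_val, ZMod.natCast_zmod_val, mul_comm, mul_assoc]

/-- `Vop` without its scalar prefactor, with `b = σ - a`; exponents are residues mod `p`,
read through `ZMod.val`, so `A ^ (-(x + 1)).val` is `A^{-x-1}` once `A ^ p = 1`. -/
noncomputable def weylSum {R : Type*} [Ring R] [Algebra ℂ R] {p : ℕ} [NeZero p]
    (ψ : AddChar (ZMod p) ℂ) (M A : R) (b : ZMod p) : R :=
  ∑ x : ZMod p, ψ (-x * b) • (M ^ x.val * A ^ (-(x + 1)).val)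

section WeylSum

variable {R : Type*} [Ring R] [StarRing R] [Algebra ℂ R] [StarModule ℂ R]
  {p : ℕ} [NeZero p] {ψ : AddChar (ZMod p) ℂ} {M A : R}

variable (hM : M ∈ unitary R) (hA : A ∈ unitary R) (hMp : M ^ p = 1)
  (hAp : A ^ p = 1) {φ : ZMod p} (hcomm : M * A = ψ φ • (A * M))
include hM hA hMp hAp hcomm

lemma star_weylTerm_mul_weylTerm (b x y : ZMod p) :
    star (ψ (-x * b) • (M ^ x.val * A ^ (-(x + 1)).val)) *
        (ψ (-y * b) • (M ^ y.val * A ^ (-(y + 1)).val)) =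
      ψ ((x - y) * b - φ * (y - x) * (y + 1)) • (A ^ (x - y).val * M ^ (y - x).val) := by
  rw [star_smul, star_mul, star_pow_val hA hAp, star_pow_val hM hMp, smul_mul_smul_comm,
    mul_assoc, ← mul_assoc (M ^ _), ← pow_val_add hMp, pow_val_mul_pow_val hcomm,
    mul_smul_comm, ← mul_assoc, ← pow_val_add hAp, smul_smul, Complex.star_def,
    ← AddChar.map_neg_eq_conj, ← AddChar.map_add_eq_mul, ← AddChar.map_add_eq_mul]
  congr 2 <;> ring_nf

lemma star_weylSum_mul_self [Fact p.Prime] (hψ : ψ.IsPrimitive) (hφ : φ ≠ 0) (b : ZMod p) :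
    star (weylSum ψ M A b) * weylSum ψ M A b = (p : ℂ) • 1 := by
  calc star (weylSum ψ M A b) * weylSum ψ M A b
      = ∑ x : ZMod p, ∑ y : ZMod p,
          ψ ((x - y) * b - φ * (y - x) * (y + 1)) • (A ^ (x - y).val * M ^ (y - x).val) := by
        simp only [weylSum, star_sum, Finset.sum_mul_sum,
          star_weylTerm_mul_weylTerm hM hA hMp hAp hcomm]
    _ = ∑ m : ZMod p, ∑ x : ZMod p,
          ψ (x * -(φ * m) + (-m * b - φ * m * (m + 1))) • (A ^ (-m).val * M ^ m.val) := by
        conv_rhs => rw [Finset.sum_comm]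
        refine Finset.sum_congr rfl fun x _ ↦ ?_
        rw [← Equiv.sum_comp (Equiv.addLeft x)]
        refine Finset.sum_congr rfl fun m _ ↦ ?_
        simp only [Equiv.coe_addLeft, sub_add_cancel_left, add_sub_cancel_left]
        congr 2
        ring
    _ = (p : ℂ) • 1 := by
        simp only [AddChar.map_add_eq_mul, ← Finset.sum_smul, ← Finset.sum_mul,
          AddChar.sum_mulShift _ hψ, neg_eq_zero, mul_eq_zero, hφ, false_or]
        simp

end WeylSum

lemma omega_pow_val {p : ℕ} [NeZero p] (x : ZMod p) : omega p ^ x.val = ZMod.stdAddChar x := by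
  rw [ZMod.stdAddChar_apply, ZMod.toCircle_apply, omega, ← Complex.exp_nat_mul]
  ring_nf

lemma Vop_eq_smul_weylSum {p d : ℕ} [NeZero p] {M A : Matrix (Fin d) (Fin d) ℂ}
    (hMp : M ^ p = 1) (hA : A ∈ unitaryGroup (Fin d) ℂ) (hAp : A ^ p = 1) (σ a : ZMod p) :
    Vop p d M A σ a =
      (omega p ^ a.val / (Real.sqrt p : ℂ)) • weylSum ZMod.stdAddChar M A (σ - a) := by
  rw [Vop, weylSum, ← ZMod.sum_range_natCast]
  congr 1
  refine Finset.sum_congr rfl fun k _ ↦ ?_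
  rw [omega_pow_val, pow_val_natCast hMp, ← star_pow, ← pow_val_natCast hAp, star_pow_val hA hAp]
  push_cast
  rfl

lemma star_mul_self_omega_div_sqrt (p n : ℕ) :
    star (omega p ^ n / (Real.sqrt p : ℂ)) * (omega p ^ n / (Real.sqrt p : ℂ)) = (p : ℂ)⁻¹ := by
  have hω : ‖omega p‖ = 1 := by simp [omega, Complex.norm_exp]
  rw [Complex.star_def, Complex.conj_mul', norm_div, norm_pow, hω, one_pow, Complex.norm_real,
    Real.norm_of_nonneg (Real.sqrt_nonneg _), ← Complex.ofReal_pow, div_pow,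
    Real.sq_sqrt (Nat.cast_nonneg _)]
  push_cast
  ring

theorem stmt5_general (p d : ℕ) [Fact p.Prime]
    (M A : Matrix (Fin d) (Fin d) ℂ)
    (hM : M ∈ Matrix.unitaryGroup (Fin d) ℂ)
    (hA : A ∈ Matrix.unitaryGroup (Fin d) ℂ)
    (hMp : M ^ p = 1) (hAp : A ^ p = 1)
    (φ : ZMod p) (hφ : φ ≠ 0)
    (hcomm : M * A = omega p ^ φ.val • (A * M))
    (σ a : ZMod p) :
    Vop p d M A σ a ∈ Matrix.unitaryGroup (Fin d) ℂ := by
  rw [omega_pow_val] at hcomm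
  rw [mem_unitaryGroup_iff', Vop_eq_smul_weylSum hMp hA hAp, star_smul, smul_mul_smul_comm,
    star_mul_self_omega_div_sqrt,
    star_weylSum_mul_self hM hA hMp hAp hcomm (ZMod.isPrimitive_stdAddChar p) hφ, smul_smul,
    inv_mul_cancel₀ (Nat.cast_ne_zero.mpr (NeZero.ne p)), one_smul]

/-- if `M, A` are unitaries with `M^p = A^p = I` and
`MA = ω^φ AM` with `φ ≠ 0`, then `V` is unitary. -/
theorem stmt5 (p d : ℕ) [Fact p.Prime] (hodd : Odd p)
    (M A : Matrix (Fin d) (Fin d) ℂ)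
    (hM : M ∈ Matrix.unitaryGroup (Fin d) ℂ)
    (hA : A ∈ Matrix.unitaryGroup (Fin d) ℂ)
    (hMp : M ^ p = 1) (hAp : A ^ p = 1)
    (φ : ZMod p) (hφ : φ ≠ 0)
    (hcomm : M * A = omega p ^ φ.val • (A * M))
    (σ a : ZMod p) :
    Vop p d M A σ a ∈ Matrix.unitaryGroup (Fin d) ℂ :=
  stmt5_general p d M A hM hA hMp hAp φ hφ hcomm σ a
end

section
/- Let p be an odd prime and define, for a unit vector |ψ⟩ ∈ (C^p)^{⊗n}, the stabilizer α-Rényi entropy M_{(α,p)}(|ψ⟩) = (1/(1−α)) log_p Σ_P Ξ_P^α(|ψ⟩) − n, where the sum is over phase-free Pauli operators and Ξ_P(|ψ⟩) = p^{−n}|⟨ψ|P|ψ⟩|². Then M_{(α,p)} is additive: M_{(α,p)}(|ψ_1⟩⊗|ψ_2⟩) = M_{(α,p)}(|ψ_1⟩) + M_{(α,p)}(|ψ_2⟩) for all α ≥ 0, α ≠ 1. -/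
open Matrix

/-- The `n`-qudit Pauli operator `X(x)Z(z)`, acting as
`X(x)Z(z)|j⟩ = ω^{z·j} |j + x⟩`. -/
noncomputable def XZ (p n : ℕ) (x z : Fin n → ZMod p) :
    Matrix (Fin n → ZMod p) (Fin n → ZMod p) ℂ :=
  fun i j => if i = x + j then omega p ^ (∑ k, z k * j k : ZMod p).val else 0

/-- `Ξ_P(|ψ⟩) = p^{−n} |⟨ψ|P|ψ⟩|²` for the phase-free Pauli `P = X(x)Z(z)`. -/
noncomputable def Xi (p n : ℕ) [NeZero p] (ψ : (Fin n → ZMod p) → ℂ)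
    (x z : Fin n → ZMod p) : ℝ :=
  (1 / (p : ℝ) ^ n) * ‖star ψ ⬝ᵥ (XZ p n x z).mulVec ψ‖ ^ 2

/-- The stabilizer α-Rényi entropy
`M_{(α,p)}(|ψ⟩) = (1/(1−α)) log_p Σ_P Ξ_P^α(|ψ⟩) − n`. -/
noncomputable def Mren (p : ℕ) [NeZero p] (α : ℝ) (n : ℕ)
    (ψ : (Fin n → ZMod p) → ℂ) : ℝ :=
  (1 / (1 - α)) *
      Real.logb p (∑ x : Fin n → ZMod p, ∑ z : Fin n → ZMod p, Xi p n ψ x z ^ α) - n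

/-- The tensor product of an `n₁`-qudit state and an `n₂`-qudit state. -/
noncomputable def tensorState (p n₁ n₂ : ℕ) (ψ₁ : (Fin n₁ → ZMod p) → ℂ)
    (ψ₂ : (Fin n₂ → ZMod p) → ℂ) : (Fin (n₁ + n₂) → ZMod p) → ℂ :=
  fun j => ψ₁ (fun i => j (Fin.castAdd n₂ i)) * ψ₂ (fun i => j (Fin.natAdd n₁ i))

/-
The phase-free Paulis on `n₁ + n₂` qudits are exactly the `X(x₁ ++ x₂) Z(z₁ ++ z₂)`, and the
tensor product of a basis vector `|j₁ ++ j₂⟩` is `|j₁⟩ ⊗ |j₂⟩`; since `ω^{(a + b).val} =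
ω^{a.val} ω^{b.val}`, the expectation of `X(x₁ ++ x₂) Z(z₁ ++ z₂)` in `|ψ₁⟩ ⊗ |ψ₂⟩` is the
product of the two expectations. Hence `Ξ` is multiplicative, the sum `Σ_P Ξ_P^α` factorizes,
and its logarithm is additive. For unit vectors `Ξ_{1}(|ψ⟩) = p^{-n} > 0`, so both factors are
nonzero and `log_p` of the product splits.
-/

open Finset

lemma Fin.append_add_append {α : Type*} [Add α] {m n : ℕ} (a c : Fin m → α) (b d : Fin n → α) :
    Fin.append a b + Fin.append c d = Fin.append (a + c) (b + d) := by
  funext k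
  refine Fin.addCases (fun i => ?_) (fun i => ?_) k <;> simp

lemma Fin.sum_append_mul_append {R : Type*} [NonUnitalNonAssocSemiring R] {m n : ℕ}
    (a c : Fin m → R) (b d : Fin n → R) :
    ∑ k, Fin.append a b k * Fin.append c d k = ∑ k, a k * c k + ∑ k, b k * d k := by
  simp [Fin.sum_univ_add]

lemma Fin.sum_append_eq_mul {α R : Type*} [Fintype α] [DecidableEq α] [CommSemiring R]
    {m n : ℕ} (f : (Fin (m + n) → α) → R) (g : (Fin m → α) → R) (h : (Fin n → α) → R)
    (hf : ∀ a b, f (Fin.append a b) = g a * h b) :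
    ∑ v, f v = (∑ a, g a) * ∑ b, h b := by
  rw [← (Fin.appendEquiv m n).sum_comp, Fintype.sum_prod_type, sum_mul_sum]
  exact sum_congr rfl fun a _ => sum_congr rfl fun b _ => hf a b

lemma omega_pow_val_add (p : ℕ) [NeZero p] (a b : ZMod p) :
    omega p ^ (a + b).val = omega p ^ a.val * omega p ^ b.val := by
  have hω : omega p ^ p = 1 := (Complex.isPrimitiveRoot_exp p (NeZero.ne p)).pow_eq_one
  rw [ZMod.val_add, ← pow_eq_pow_mod _ hω, pow_add]

lemma star_dotProduct_XZ_mulVec (p n : ℕ) [NeZero p] (ψ : (Fin n → ZMod p) → ℂ)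
    (x z : Fin n → ZMod p) :
    star ψ ⬝ᵥ XZ p n x z *ᵥ ψ =
      ∑ j, starRingEnd ℂ (ψ (x + j)) * (omega p ^ (∑ k, z k * j k : ZMod p).val * ψ j) := by
  simp only [dotProduct, mulVec, XZ, Pi.star_apply, RCLike.star_def, mul_sum]
  rw [sum_comm]
  refine sum_congr rfl fun j _ => ?_
  rw [sum_eq_single (x + j) (fun i _ hi => by simp [hi]) (by simp)]
  simp

lemma tensorState_append (p n₁ n₂ : ℕ) (ψ₁ : (Fin n₁ → ZMod p) → ℂ)
    (ψ₂ : (Fin n₂ → ZMod p) → ℂ) (j₁ : Fin n₁ → ZMod p) (j₂ : Fin n₂ → ZMod p) :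
    tensorState p n₁ n₂ ψ₁ ψ₂ (Fin.append j₁ j₂) = ψ₁ j₁ * ψ₂ j₂ := by
  simp [tensorState]

lemma star_dotProduct_XZ_mulVec_tensorState (p : ℕ) [NeZero p] (n₁ n₂ : ℕ)
    (ψ₁ : (Fin n₁ → ZMod p) → ℂ) (ψ₂ : (Fin n₂ → ZMod p) → ℂ)
    (x₁ z₁ : Fin n₁ → ZMod p) (x₂ z₂ : Fin n₂ → ZMod p) :
    star (tensorState p n₁ n₂ ψ₁ ψ₂) ⬝ᵥ
        XZ p (n₁ + n₂) (Fin.append x₁ x₂) (Fin.append z₁ z₂) *ᵥ tensorState p n₁ n₂ ψ₁ ψ₂ =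
      (star ψ₁ ⬝ᵥ XZ p n₁ x₁ z₁ *ᵥ ψ₁) * (star ψ₂ ⬝ᵥ XZ p n₂ x₂ z₂ *ᵥ ψ₂) := by
  simp only [star_dotProduct_XZ_mulVec]
  refine Fin.sum_append_eq_mul _ _ _ fun j₁ j₂ => ?_
  rw [Fin.append_add_append, Fin.sum_append_mul_append, omega_pow_val_add,
    tensorState_append, tensorState_append, map_mul]
  ring

lemma Xi_tensorState (p : ℕ) [NeZero p] (n₁ n₂ : ℕ) (ψ₁ : (Fin n₁ → ZMod p) → ℂ)
    (ψ₂ : (Fin n₂ → ZMod p) → ℂ) (x₁ z₁ : Fin n₁ → ZMod p) (x₂ z₂ : Fin n₂ → ZMod p) :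
    Xi p (n₁ + n₂) (tensorState p n₁ n₂ ψ₁ ψ₂) (Fin.append x₁ x₂) (Fin.append z₁ z₂) =
      Xi p n₁ ψ₁ x₁ z₁ * Xi p n₂ ψ₂ x₂ z₂ := by
  rw [Xi, Xi, Xi, star_dotProduct_XZ_mulVec_tensorState, norm_mul, mul_pow, pow_add]
  ring

lemma Xi_nonneg (p n : ℕ) [NeZero p] (ψ : (Fin n → ZMod p) → ℂ) (x z : Fin n → ZMod p) :
    0 ≤ Xi p n ψ x z := by
  unfold Xi
  positivity

lemma Xi_zero_zero (p n : ℕ) [NeZero p] (ψ : (Fin n → ZMod p) → ℂ)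
    (hψ : ∑ i, ‖ψ i‖ ^ 2 = 1) : Xi p n ψ 0 0 = 1 / (p : ℝ) ^ n := by
  have hnorm : star ψ ⬝ᵥ XZ p n 0 0 *ᵥ ψ = ((∑ j, ‖ψ j‖ ^ 2 : ℝ) : ℂ) := by
    rw [star_dotProduct_XZ_mulVec]
    push_cast
    refine sum_congr rfl fun j _ => ?_
    simp [mul_comm, Complex.mul_conj, Complex.normSq_eq_norm_sq]
  rw [Xi, hnorm, hψ]
  simp

lemma sum_Xi_rpow_pos (p n : ℕ) [NeZero p] (α : ℝ) (ψ : (Fin n → ZMod p) → ℂ)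
    (hψ : ∑ i, ‖ψ i‖ ^ 2 = 1) :
    0 < ∑ x : Fin n → ZMod p, ∑ z : Fin n → ZMod p, Xi p n ψ x z ^ α := by
  have hXi : 0 < Xi p n ψ 0 0 := by
    rw [Xi_zero_zero p n ψ hψ]
    have : 0 < p := NeZero.pos p
    positivity
  have hnonneg : ∀ x z, 0 ≤ Xi p n ψ x z ^ α := fun x z => Real.rpow_nonneg (Xi_nonneg ..) α
  exact sum_pos' (fun x _ => sum_nonneg fun z _ => hnonneg x z)
    ⟨0, mem_univ _, sum_pos' (fun z _ => hnonneg 0 z) ⟨0, mem_univ _, Real.rpow_pos_of_pos hXi α⟩⟩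

lemma sum_Xi_rpow_tensorState (p : ℕ) [NeZero p] (α : ℝ) (n₁ n₂ : ℕ)
    (ψ₁ : (Fin n₁ → ZMod p) → ℂ) (ψ₂ : (Fin n₂ → ZMod p) → ℂ) :
    ∑ x : Fin (n₁ + n₂) → ZMod p, ∑ z : Fin (n₁ + n₂) → ZMod p,
        Xi p (n₁ + n₂) (tensorState p n₁ n₂ ψ₁ ψ₂) x z ^ α =
      (∑ x : Fin n₁ → ZMod p, ∑ z : Fin n₁ → ZMod p, Xi p n₁ ψ₁ x z ^ α) *
        ∑ x : Fin n₂ → ZMod p, ∑ z : Fin n₂ → ZMod p, Xi p n₂ ψ₂ x z ^ α :=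
  Fin.sum_append_eq_mul _ _ _ fun x₁ x₂ => Fin.sum_append_eq_mul _ _ _ fun z₁ z₂ => by
    rw [Xi_tensorState, Real.mul_rpow (Xi_nonneg ..) (Xi_nonneg ..)]

theorem stmt14_general (p : ℕ) [Fact p.Prime] (α : ℝ)
    (n₁ n₂ : ℕ) (ψ₁ : (Fin n₁ → ZMod p) → ℂ) (ψ₂ : (Fin n₂ → ZMod p) → ℂ)
    (h₁ : ∑ i, ‖ψ₁ i‖ ^ 2 = 1) (h₂ : ∑ i, ‖ψ₂ i‖ ^ 2 = 1) :
    Mren p α (n₁ + n₂) (tensorState p n₁ n₂ ψ₁ ψ₂) =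
      Mren p α n₁ ψ₁ + Mren p α n₂ ψ₂ := by
  rw [Mren, Mren, Mren, sum_Xi_rpow_tensorState,
    Real.logb_mul (sum_Xi_rpow_pos p n₁ α ψ₁ h₁).ne' (sum_Xi_rpow_pos p n₂ α ψ₂ h₂).ne']
  push_cast
  ring

/-- the stabilizer α-Rényi entropy is additive under tensor products
of unit vectors, for every `α ≥ 0`, `α ≠ 1`. -/
theorem stmt14 (p : ℕ) [Fact p.Prime] (hodd : Odd p) (α : ℝ) (hα : 0 ≤ α) (hα1 : α ≠ 1)
    (n₁ n₂ : ℕ) (ψ₁ : (Fin n₁ → ZMod p) → ℂ) (ψ₂ : (Fin n₂ → ZMod p) → ℂ)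
    (h₁ : ∑ i, ‖ψ₁ i‖ ^ 2 = 1) (h₂ : ∑ i, ‖ψ₂ i‖ ^ 2 = 1) :
    Mren p α (n₁ + n₂) (tensorState p n₁ n₂ ψ₁ ψ₂) =
      Mren p α n₁ ψ₁ + Mren p α n₂ ψ₂ :=
  stmt14_general p α n₁ n₂ ψ₁ ψ₂ h₁ h₂
end
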